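/- arXiv:1904.00964 — 4 statements merged into one kernel-verified Lean document; each statement's English description precedes it below -/
import Mathlib

section
/- If G is a GP4-graph, then the semipaired domination number of G equals two-fifths of the number of vertices of G; that is, γ_pr2(G) = (2/5)·|V(G)| = 2·n_H, where n_H is the number of vertices of the underlying graph H. -/
/-!
Every vertex `v` of `H` carries a pendant path `v w x y z`. A dominating set must meet the
closed neighbourhoods `{v, w, x}` of `w` and `{y, z}` of `z`, and these `2 n_H` sets are pairwise
disjoint, so `γ_pr2 ≥ 2 n_H`. Conversely the sets `{w, y}` are dominating and `w, y` are at
distance 2 (through `x`), so the union of these pairs is a semipaired dominating set of size `2 n_H`.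
-/

/-- `D` is a dominating set of `G`. -/
def IsDomSet {V : Type*} (G : SimpleGraph V) (D : Finset V) : Prop :=
  ∀ v, v ∉ D → ∃ u ∈ D, G.Adj u v

/-- `D` is a semipaired dominating set of `G`: a dominating set that can be partitioned
into 2-element subsets (given by a fixed-point-free involution on `D`) such that the two
vertices in each pair are at distance at most 2 (adjacent or having a common neighbor). -/
def IsSemiPD {V : Type*} (G : SimpleGraph V) (D : Finset V) : Prop :=
  IsDomSet G D ∧ ∃ f : V → V, ∀ v ∈ D, f v ∈ D ∧ f v ≠ v ∧ f (f v) = v ∧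
    (G.Adj v (f v) ∨ ∃ w, G.Adj v w ∧ G.Adj (f v) w)

/-- The semipaired domination number `γ_pr2(G)`. -/
noncomputable def gammaPr2 {V : Type*} (G : SimpleGraph V) : ℕ :=
  sInf {k | ∃ D : Finset V, IsSemiPD G D ∧ D.card = k}

/-- The defining relation of the GP4-graph built from `H`: vertices are `Sum.inl v` for
the original vertices `v` of `H` and `Sum.inr (v, k)` (`k = 0,1,2,3`, corresponding to
`w_v, x_v, y_v, z_v`) for the added path of length 3 attached at `v`. -/
def gp4Rel {α : Type*} (H : SimpleGraph α) : α ⊕ α × Fin 4 → α ⊕ α × Fin 4 → Prop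
  | Sum.inl u, Sum.inl v => H.Adj u v
  | Sum.inl u, Sum.inr (v, k) => u = v ∧ k = 0
  | Sum.inr (u, k), Sum.inr (v, l) => u = v ∧ (l : ℕ) = (k : ℕ) + 1
  | _, _ => False

/-- The GP4-graph obtained from `H` by attaching a path of length 3 to every vertex. -/
def gp4 {α : Type*} (H : SimpleGraph α) : SimpleGraph (α ⊕ α × Fin 4) :=
  SimpleGraph.fromRel (gp4Rel H)

open Finset

section Domination

variable {V : Type*} {G : SimpleGraph V}

/-- `g` witnesses that the closed neighbourhoods of the vertices `t b` are pairwise disjoint;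
a dominating set meets each of them. -/
lemma IsDomSet.card_le_of_closedNbhd {β : Type*} [Fintype β] {D : Finset V} (hD : IsDomSet G D)
    (g : V → β) (t : β → V) (ht : ∀ b u, (u = t b ∨ G.Adj u (t b)) → g u = b) :
    Fintype.card β ≤ D.card := by
  classical
  have hsurj : (univ : Finset β) ⊆ D.image g := by
    intro b _
    rw [mem_image]
    by_cases hb : t b ∈ D
    · exact ⟨t b, hb, ht b _ (Or.inl rfl)⟩
    · obtain ⟨u, hu, hadj⟩ := hD _ hb
      exact ⟨u, hu, ht b u (Or.inr hadj)⟩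
  calc Fintype.card β = (univ : Finset β).card := card_univ.symm
    _ ≤ (D.image g).card := card_le_card hsurj
    _ ≤ D.card := card_image_le

lemma gammaPr2_eq_of_isSemiPD {D : Finset V} {k : ℕ} (hD : IsSemiPD G D) (hk : D.card = k)
    (hmin : ∀ E, IsDomSet G E → k ≤ E.card) : gammaPr2 G = k :=
  le_antisymm (Nat.sInf_le ⟨D, hD, hk⟩)
    (le_csInf ⟨k, D, hD, hk⟩ (by rintro _ ⟨E, hE, rfl⟩; exact hmin E hE.1))

end Domination

namespace GP4

variable {α : Type*} (H : SimpleGraph α)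

@[simp]
lemma adj_inl_inr {u v : α} {k : Fin 4} :
    (gp4 H).Adj (.inl u) (.inr (v, k)) ↔ u = v ∧ k = 0 := by
  simp [gp4, gp4Rel]

@[simp]
lemma adj_inr_inl {u v : α} {k : Fin 4} :
    (gp4 H).Adj (.inr (v, k)) (.inl u) ↔ u = v ∧ k = 0 := by
  rw [SimpleGraph.adj_comm, adj_inl_inr]

@[simp]
lemma adj_inr_inr {u v : α} {k l : Fin 4} :
    (gp4 H).Adj (.inr (u, k)) (.inr (v, l)) ↔ u = v ∧ ((l : ℕ) = k + 1 ∨ (k : ℕ) = l + 1) := by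
  simp only [gp4, gp4Rel, SimpleGraph.fromRel_adj, ne_eq, Sum.inr.injEq, Prod.mk.injEq]
  constructor
  · rintro ⟨-, ⟨rfl, h⟩ | ⟨rfl, h⟩⟩ <;> simp [h]
  · rintro ⟨rfl, h | h⟩ <;> refine ⟨fun hkl => ?_, by simp [h]⟩ <;> omega

/-- Which of the two disjoint closed neighbourhoods `N[w_v] = {v, w_v, x_v}` (`false`) or
`N[z_v] = {y_v, z_v}` (`true`) contains a vertex. -/
def cell : α ⊕ α × Fin 4 → α × Bool
  | .inl v => (v, false)
  | .inr (v, k) => (v, decide (1 < k))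

def cellCentre : α × Bool → α ⊕ α × Fin 4
  | (v, b) => .inr (v, bif b then 3 else 0)

lemma cell_eq_of_closedNbhd (c : α × Bool) (u : α ⊕ α × Fin 4)
    (hu : u = cellCentre c ∨ (gp4 H).Adj u (cellCentre c)) : cell u = c := by
  obtain ⟨v, b⟩ := c
  rcases u with a | ⟨a, k⟩ <;> cases b <;>
    simp [cell, cellCentre] at hu ⊢ <;> grind

lemma card_le_of_isDomSet [Fintype α] {E : Finset (α ⊕ α × Fin 4)} (hE : IsDomSet (gp4 H) E) :
    2 * Fintype.card α ≤ E.card := by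
  simpa [mul_comm] using hE.card_le_of_closedNbhd cell cellCentre (cell_eq_of_closedNbhd H)

def wySet [Fintype α] : Finset (α ⊕ α × Fin 4) :=
  (univ ×ˢ {0, 2}).map .inr

lemma mem_wySet [Fintype α] {x : α ⊕ α × Fin 4} :
    x ∈ wySet ↔ ∃ v, x = .inr (v, 0) ∨ x = .inr (v, 2) := by
  simp [wySet, eq_comm]

lemma card_wySet [Fintype α] : (wySet : Finset (α ⊕ α × Fin 4)).card = 2 * Fintype.card α := by
  simp [wySet, mul_comm]

/-- Subtraction in `Fin 4` is modular, so `2 - ·` swaps `0` and `2`, i.e. `w_v` and `y_v`. -/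
def partner : α ⊕ α × Fin 4 → α ⊕ α × Fin 4 :=
  Sum.map id (Prod.map id (2 - ·))

lemma isSemiPD_wySet [Fintype α] : IsSemiPD (gp4 H) wySet := by
  refine ⟨?_, partner, ?_⟩
  · have hw (v : α) : .inr (v, 0) ∈ wySet := mem_wySet.2 ⟨v, .inl rfl⟩
    have hy (v : α) : .inr (v, 2) ∈ wySet := mem_wySet.2 ⟨v, .inr rfl⟩
    rintro (v | ⟨v, k⟩) hx
    · exact ⟨_, hw v, by simp⟩
    · fin_cases k
      · exact absurd (hw v) hx
      · exact ⟨_, hw v, by simp⟩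
      · exact absurd (hy v) hx
      · exact ⟨_, hy v, by simp⟩
  · intro x hx
    obtain ⟨v, rfl | rfl⟩ := mem_wySet.1 hx <;>
      refine ⟨mem_wySet.2 ⟨v, by simp [partner]⟩, by simp [partner], rfl,
        .inr ⟨.inr (v, 1), by simp [partner]⟩⟩

end GP4

theorem gammaPr2_gp4_general {α : Type*} [Fintype α]
    (H : SimpleGraph α) :
    gammaPr2 (gp4 H) = 2 * Fintype.card α ∧
    5 * gammaPr2 (gp4 H) = 2 * Fintype.card (α ⊕ α × Fin 4) := by
  have hγ : gammaPr2 (gp4 H) = 2 * Fintype.card α :=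
    gammaPr2_eq_of_isSemiPD (GP4.isSemiPD_wySet H) GP4.card_wySet
      fun _ => GP4.card_le_of_isDomSet H
  refine ⟨hγ, ?_⟩
  rw [hγ, Fintype.card_sum, Fintype.card_prod, Fintype.card_fin]
  ring

/-- If `G` is a GP4-graph built from a connected graph `H`, then
`γ_pr2(G) = 2·n_H = (2/5)·|V(G)|`. -/
theorem gammaPr2_gp4 {α : Type*} [Fintype α] [DecidableEq α]
    (H : SimpleGraph α) (hconn : H.Connected) :
    gammaPr2 (gp4 H) = 2 * Fintype.card α ∧
    5 * gammaPr2 (gp4 H) = 2 * Fintype.card (α ⊕ α × Fin 4) :=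
  gammaPr2_gp4_general H
end

section
/- Let G be a connected interval graph with interval model I_1,…,I_n (all endpoints pairwise distinct), vertices v_1,…,v_n indexed in left-end ordering, and for each i ∈ [n] let V_i = {v_1,…,v_i}. Then for every i ∈ [n], the induced subgraph G[V_i] is connected. -/
/-!
In the left-end ordering, if `u ~ w` and `w < k ≤ u`, then `a_w ≤ a_k ≤ a_u ≤ b_w`, the last
because `I_u` meets `I_w`; so the left end of `I_k` lies in `I_w` and `w ~ k`.
Following a path from `v_k` to `v_1` until it first drops below `k` therefore yields a neighbour
of `v_k` with smaller index. So every vertex other than `v_1` has an earlier neighbour, and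
descending along earlier neighbours joins every vertex of `V_i` to `v_1` inside `G[V_i]`.
-/

open Set

namespace SimpleGraph

variable {α : Type*} [LinearOrder α] {G : SimpleGraph α}

theorem exists_lt_adj_of_walk (hcross : ∀ u w k, G.Adj u w → w < k → k ≤ u → G.Adj w k)
    {u z k : α} (p : G.Walk u z) (hz : z < k) (hk : k ≤ u) : ∃ w < k, G.Adj w k := by
  induction p with
  | nil => exact absurd (hk.trans_lt hz) (lt_irrefl _)
  | @cons u m _ h q ih =>
    by_cases hm : m < k
    · exact ⟨m, hm, hcross u m k h hm hk⟩
    · exact ih hz (not_lt.mp hm)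

theorem Connected.exists_lt_adj (hconn : G.Connected)
    (hcross : ∀ u w k, G.Adj u w → w < k → k ≤ u → G.Adj w k)
    {k : α} (hk : ¬IsMin k) : ∃ w < k, G.Adj w k := by
  obtain ⟨z, hz⟩ := not_isMin_iff.mp hk
  exact exists_lt_adj_of_walk hcross (hconn k z).some hz le_rfl

theorem exists_isMin_reachable_induce_Iic [WellFoundedLT α]
    (h : ∀ k : α, ¬IsMin k → ∃ w < k, G.Adj w k) {i v : α} (hv : v ≤ i) :
    ∃ m, IsMin m ∧ ∃ hm : m ≤ i,
      (G.induce (Iic i)).Reachable ⟨v, hv⟩ ⟨m, hm⟩ := by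
  induction v using WellFoundedLT.induction with
  | _ v ih =>
    by_cases hmin : IsMin v
    · exact ⟨v, hmin, hv, .rfl⟩
    obtain ⟨w, hwv, hadj⟩ := h v hmin
    obtain ⟨m, hm, hmi, hreach⟩ := ih w hwv (hwv.le.trans hv)
    have hstep : (G.induce (Iic i)).Adj ⟨v, hv⟩ ⟨w, hwv.le.trans hv⟩ := by
      simpa using hadj.symm
    exact ⟨m, hm, hmi, hstep.reachable.trans hreach⟩

theorem induce_Iic_connected_of_exists_lt_adj [WellFoundedLT α]
    (h : ∀ k : α, ¬IsMin k → ∃ w < k, G.Adj w k) (i : α) :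
    (G.induce (Iic i)).Connected := by
  have : Nonempty (Iic i) := ⟨⟨i, le_rfl⟩⟩
  refine ⟨fun u v => ?_⟩
  obtain ⟨m, hm, hmi, hu⟩ := exists_isMin_reachable_induce_Iic h u.2
  obtain ⟨m', hm', hmi', hv⟩ := exists_isMin_reachable_induce_Iic h v.2
  obtain rfl : m = m' := (le_total m m').elim (fun h => (hm'.eq_of_ge h).symm) hm.eq_of_ge
  exact hu.trans hv.symm

end SimpleGraph

theorem interval_adj_of_adj_of_lt_of_le {ι : Type*} [LinearOrder ι] {a b : ι → ℝ}
    {G : SimpleGraph ι} (hab : ∀ i, a i ≤ b i) (hmono : Monotone a)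
    (hadj : ∀ i j, G.Adj i j ↔ i ≠ j ∧ (Icc (a i) (b i) ∩ Icc (a j) (b j)).Nonempty)
    {u w k : ι} (huw : G.Adj u w) (hwk : w < k) (hku : k ≤ u) : G.Adj w k := by
  obtain ⟨-, x, hxu, hxw⟩ := (hadj u w).mp huw
  refine (hadj w k).mpr ⟨hwk.ne, a k, ⟨hmono hwk.le, ?_⟩, le_rfl, hab k⟩
  exact (hmono hku).trans (hxu.1.trans hxw.2)

theorem interval_induce_connected_general {n : ℕ} (a b : Fin n → ℝ) (G : SimpleGraph (Fin n))
    (hab : ∀ i, a i < b i)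
    (hmono : StrictMono a)
    (hadj : ∀ i j : Fin n, G.Adj i j ↔
      i ≠ j ∧ (Set.Icc (a i) (b i) ∩ Set.Icc (a j) (b j)).Nonempty)
    (hconn : G.Connected) :
    ∀ i : Fin n, (G.induce {j : Fin n | j ≤ i}).Connected :=
  G.induce_Iic_connected_of_exists_lt_adj fun _ hk =>
    hconn.exists_lt_adj
      (fun _ _ _ => interval_adj_of_adj_of_lt_of_le (fun i => (hab i).le) hmono.monotone hadj) hk

/-- Let `G` be a connected interval graph with interval model `I_i = [a i, b i]`
(all endpoints pairwise distinct), vertices indexed in left-end ordering, and for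
each `i` let `V_i = {v_1, …, v_i}`. Then the induced subgraph `G[V_i]` is connected. -/
theorem interval_induce_connected {n : ℕ} (a b : Fin n → ℝ) (G : SimpleGraph (Fin n))
    (hab : ∀ i, a i < b i)
    (hbinj : Function.Injective b)
    (habne : ∀ i j : Fin n, a i ≠ b j)
    (hmono : StrictMono a)
    (hadj : ∀ i j : Fin n, G.Adj i j ↔
      i ≠ j ∧ (Set.Icc (a i) (b i) ∩ Set.Icc (a j) (b j)).Nonempty)
    (hconn : G.Connected) :
    ∀ i : Fin n, (G.induce {j : Fin n | j ≤ i}).Connected :=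
  interval_induce_connected_general a b G hab hmono hadj hconn
end

section
/- Let G be a connected interval graph with at least two vertices, with interval model having pairwise distinct endpoints and vertices v_1,…,v_n in left-end ordering; let G_i = G[{v_1,…,v_i}], and let F(v_i) denote the least-index neighbor of v_i (with F(v_1) = v_1). For every i ≥ 2, if F(v_i) = v_1, then {v_1, v_i} is a semipaired dominating set of G_i of minimum cardinality. -/
/-!
Since `v_1` has the smallest left endpoint and meets `I_i`, its interval contains the left
endpoints of all `v_x` with `1 < x < i`, so `v_1` dominates `G_i`; as `v_1 v_i` is an edge,
`{v_1, v_i}` is a semipaired dominating set. Any semipaired dominating set is nonempty and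
closed under pairing, hence has at least two vertices.
-/

/-- `D` is a semipaired dominating set of the subgraph of `G` induced by the vertex
set `S`: `D ⊆ S`, every vertex of `S` outside `D` has a neighbor in `D`, and `D` can
be partitioned into 2-element subsets (given by a fixed-point-free involution on `D`)
such that the two vertices in each pair are at distance at most 2 in `G[S]`
(adjacent, or having a common neighbor inside `S`). -/
def IsSemiPDOn {V : Type*} (G : SimpleGraph V) (S : Set V) (D : Finset V) : Prop :=
  (∀ v ∈ D, v ∈ S) ∧
  (∀ v ∈ S, v ∉ D → ∃ u ∈ D, G.Adj u v) ∧
  ∃ f : V → V, ∀ v ∈ D, f v ∈ D ∧ f v ≠ v ∧ f (f v) = v ∧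
    (G.Adj v (f v) ∨ ∃ w ∈ S, G.Adj v w ∧ G.Adj (f v) w)

/-- `D` is a minimum cardinality semipaired dominating set of `G[S]`. -/
def IsMinSemiPDOn {V : Type*} (G : SimpleGraph V) (S : Set V) (D : Finset V) : Prop :=
  IsSemiPDOn G S D ∧ ∀ D' : Finset V, IsSemiPDOn G S D' → D.card ≤ D'.card

section SemiPD

variable {V : Type*} {G : SimpleGraph V} {S : Set V}

theorem IsSemiPDOn.two_le_card {D : Finset V} (hD : IsSemiPDOn G S D) (hS : S.Nonempty) :
    2 ≤ D.card := by
  obtain ⟨-, hdom, f, hf⟩ := hD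
  obtain ⟨s, hs⟩ := hS
  obtain ⟨v, hv⟩ : D.Nonempty := by
    by_cases h : s ∈ D
    · exact ⟨s, h⟩
    · obtain ⟨u, hu, -⟩ := hdom s hs h
      exact ⟨u, hu⟩
  obtain ⟨hfv, hfvne, -⟩ := hf v hv
  exact Finset.one_lt_card.mpr ⟨v, hv, f v, hfv, hfvne.symm⟩

theorem isSemiPDOn_pair [DecidableEq V] {u v : V} (huv : G.Adj u v) (hu : u ∈ S) (hv : v ∈ S)
    (hdom : ∀ x ∈ S, x ≠ u → x ≠ v → G.Adj u x) : IsSemiPDOn G S {u, v} := by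
  refine ⟨by simp [hu, hv], fun x hx hxD => ?_, Equiv.swap u v, ?_⟩
  · simp only [Finset.mem_insert, Finset.mem_singleton, not_or] at hxD
    exact ⟨u, by simp, hdom x hx hxD.1 hxD.2⟩
  · simp only [Finset.mem_insert, Finset.mem_singleton]
    rintro x (rfl | rfl)
    · simp [huv, huv.ne.symm]
    · simp [huv.symm, huv.ne]

theorem isMinSemiPDOn_pair [DecidableEq V] {u v : V} (huv : G.Adj u v) (hu : u ∈ S)
    (hv : v ∈ S) (hdom : ∀ x ∈ S, x ≠ u → x ≠ v → G.Adj u x) : IsMinSemiPDOn G S {u, v} :=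
  ⟨isSemiPDOn_pair huv hu hv hdom, fun _ hD' =>
    (Finset.card_pair huv.ne).trans_le (hD'.two_le_card ⟨u, hu⟩)⟩

end SemiPD

theorem adj_of_adj_of_lt_of_lt {ι : Type*} [Preorder ι] {a b : ι → ℝ} {G : SimpleGraph ι}
    (hab : ∀ i, a i ≤ b i) (hmono : StrictMono a)
    (hadj : ∀ i j, G.Adj i j ↔ i ≠ j ∧ (Set.Icc (a i) (b i) ∩ Set.Icc (a j) (b j)).Nonempty)
    {j x i : ι} (hjx : j < x) (hxi : x < i) (hji : G.Adj j i) : G.Adj j x := by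
  obtain ⟨-, t, ⟨-, htj⟩, hit, -⟩ := (hadj j i).1 hji
  exact (hadj j x).2 ⟨hjx.ne, a x,
    ⟨(hmono hjx).le, ((hmono hxi).le.trans hit).trans htj⟩, le_rfl, hab x⟩

theorem interval_minSemiPD_first_general {n : ℕ} (a b : Fin n → ℝ)
    (G : SimpleGraph (Fin n))
    (hab : ∀ i, a i < b i)
    (hmono : StrictMono a)
    (hadj : ∀ i j : Fin n, G.Adj i j ↔
      i ≠ j ∧ (Set.Icc (a i) (b i) ∩ Set.Icc (a j) (b j)).Nonempty)
    (v0 i : Fin n) (hv0 : (v0 : ℕ) = 0) (hi : v0 < i)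
    (hF : G.Adj v0 i ∧ ∀ x : Fin n, G.Adj x i → v0 ≤ x) :
    IsMinSemiPDOn G {x : Fin n | x ≤ i} {v0, i} := by
  refine isMinSemiPDOn_pair hF.1 hi.le (show i ≤ i from le_rfl) fun x hx hx0 hxi => ?_
  have hv0x : v0 < x := lt_of_le_of_ne (Fin.le_def.mpr (by omega)) hx0.symm
  exact adj_of_adj_of_lt_of_lt (fun j => (hab j).le) hmono hadj hv0x
    (lt_of_le_of_ne hx hxi) hF.1

/-- Let `G` be a connected interval graph with at least two vertices, with interval
model `I_i = [a i, b i]` having pairwise distinct endpoints, and vertices in left-end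
ordering. Here `v0` is the first vertex (`v_1` in 1-indexed notation) and
`G_i = G[{x | x ≤ i}]`. For every `i ≥ 2` (i.e. `i ≠ v_1`), if `F(v_i) = v_1`
(the least-index neighbor of `v_i` is `v_1`), then `{v_1, v_i}` is a semipaired
dominating set of `G_i` of minimum cardinality. -/
theorem interval_minSemiPD_first {n : ℕ} (hn : 2 ≤ n) (a b : Fin n → ℝ)
    (G : SimpleGraph (Fin n))
    (hab : ∀ i, a i < b i)
    (hbinj : Function.Injective b)
    (habne : ∀ i j : Fin n, a i ≠ b j)
    (hmono : StrictMono a)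
    (hadj : ∀ i j : Fin n, G.Adj i j ↔
      i ≠ j ∧ (Set.Icc (a i) (b i) ∩ Set.Icc (a j) (b j)).Nonempty)
    (hconn : G.Connected)
    (v0 i : Fin n) (hv0 : (v0 : ℕ) = 0) (hi : v0 < i)
    (hF : G.Adj v0 i ∧ ∀ x : Fin n, G.Adj x i → v0 ≤ x) :
    IsMinSemiPDOn G {x : Fin n | x ≤ i} {v0, i} :=
  interval_minSemiPD_first_general a b G hab hmono hadj v0 i hv0 hi hF
end

section
/- Let G be a connected interval graph with at least two vertices, with interval model having pairwise distinct endpoints and vertices v_1,…,v_n in left-end ordering; let G_i = G[{v_1,…,v_i}], and let F(v_i) denote the least-index neighbor of v_i (with F(v_1) = v_1). For i > 1, if F(v_i) = v_j with j > 1 and F(v_j) = v_1, then {v_1, v_j} is a semipaired dominating set of G_i of minimum cardinality. -/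
/-!
Since `F(v_j) = v_1`, the interval of `v_1` reaches the left end of `v_j`, hence meets every
interval starting between them; likewise the interval of `v_j` meets every interval starting
between `v_j` and `v_i`. Moreover `j < i`, for otherwise `v_1` would be a neighbor of `v_i`
preceding `F(v_i)`. So the adjacent pair `{v_1, v_j}` dominates `G_i`, and no semipaired
dominating set has fewer than two vertices.
-/

namespace IsSemiPDOn

variable {V : Type*} {G : SimpleGraph V} {S : Set V}

theorem of_adj_pair [DecidableEq V] {u w : V} (huw : G.Adj u w) (hu : u ∈ S) (hw : w ∈ S)
    (hdom : ∀ v ∈ S, v ≠ u → v ≠ w → G.Adj u v ∨ G.Adj w v) :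
    IsSemiPDOn G S {u, w} := by
  refine ⟨?_, ?_, Equiv.swap u w, ?_⟩
  · simp only [Finset.mem_insert, Finset.mem_singleton]
    rintro v (rfl | rfl) <;> assumption
  · intro v hv hvD
    simp only [Finset.mem_insert, Finset.mem_singleton, not_or] at hvD
    rcases hdom v hv hvD.1 hvD.2 with h | h
    · exact ⟨u, by simp, h⟩
    · exact ⟨w, by simp, h⟩
  · simp only [Finset.mem_insert, Finset.mem_singleton]
    rintro v (rfl | rfl)
    · simpa using ⟨huw.ne.symm, Or.inl huw⟩
    · simpa using ⟨huw.ne, Or.inl huw.symm⟩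

theorem two_le_card_s10 {D : Finset V} (hD : IsSemiPDOn G S D) (hS : S.Nonempty) :
    2 ≤ D.card := by
  obtain ⟨-, hdom, f, hf⟩ := hD
  obtain ⟨v, hv⟩ := hS
  obtain ⟨u, hu⟩ : ∃ u, u ∈ D := by
    by_cases hvD : v ∈ D
    · exact ⟨v, hvD⟩
    · obtain ⟨u, hu, -⟩ := hdom v hv hvD
      exact ⟨u, hu⟩
  exact Finset.one_lt_card.mpr ⟨u, hu, f u, (hf u hu).1, (hf u hu).2.1.symm⟩

end IsSemiPDOn

section IntervalGraph

variable {ι α : Type*} [LinearOrder ι] [LinearOrder α] {a b : ι → α} {G : SimpleGraph ι}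

theorem adj_iff_of_lt (hab : ∀ i, a i ≤ b i) (hmono : Monotone a)
    (hadj : ∀ i j, G.Adj i j ↔ i ≠ j ∧ (Set.Icc (a i) (b i) ∩ Set.Icc (a j) (b j)).Nonempty)
    {u w : ι} (huw : u < w) : G.Adj u w ↔ a w ≤ b u := by
  rw [hadj]
  constructor
  · rintro ⟨-, t, ⟨-, htu⟩, htw, -⟩
    exact htw.trans htu
  · intro h
    exact ⟨huw.ne, a w, ⟨hmono huw.le, h⟩, le_rfl, hab w⟩

theorem adj_of_lt_of_le (hab : ∀ i, a i ≤ b i) (hmono : Monotone a)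
    (hadj : ∀ i j, G.Adj i j ↔ i ≠ j ∧ (Set.Icc (a i) (b i) ∩ Set.Icc (a j) (b j)).Nonempty)
    {u x w : ι} (hux : u < x) (hxw : x ≤ w) (huw : G.Adj u w) : G.Adj u x := by
  have hw : a w ≤ b u := (adj_iff_of_lt hab hmono hadj (hux.trans_le hxw)).mp huw
  exact (adj_iff_of_lt hab hmono hadj hux).mpr ((hmono hxw).trans hw)

end IntervalGraph

theorem interval_minSemiPD_second_general {n : ℕ} (a b : Fin n → ℝ)
    (G : SimpleGraph (Fin n))
    (hab : ∀ i, a i < b i)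
    (hmono : StrictMono a)
    (hadj : ∀ i j : Fin n, G.Adj i j ↔
      i ≠ j ∧ (Set.Icc (a i) (b i) ∩ Set.Icc (a j) (b j)).Nonempty)
    (v0 i j : Fin n) (hv0 : (v0 : ℕ) = 0) (hi : v0 < i) (hj : v0 < j)
    (hFi : G.Adj j i ∧ ∀ x : Fin n, G.Adj x i → j ≤ x)
    (hFj : G.Adj v0 j ∧ ∀ x : Fin n, G.Adj x j → v0 ≤ x) :
    IsMinSemiPDOn G {x : Fin n | x ≤ i} {v0, j} := by
  have hab' : ∀ i, a i ≤ b i := fun i => (hab i).le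
  have hv0_le : ∀ x : Fin n, v0 ≤ x := fun x => Fin.le_def.mpr (hv0 ▸ Nat.zero_le _)
  have hji : j < i := by
    refine lt_of_le_of_ne (not_lt.mp fun hij => ?_) hFi.1.ne
    exact hj.not_ge (hFi.2 v0 (adj_of_lt_of_le hab' hmono.monotone hadj hi hij.le hFj.1))
  have hdom : ∀ x ≤ i, x ≠ v0 → x ≠ j → G.Adj v0 x ∨ G.Adj j x := by
    intro x hxi hx0 hxj
    rcases lt_or_gt_of_ne hxj with hlt | hgt
    · exact .inl (adj_of_lt_of_le hab' hmono.monotone hadj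
        ((hv0_le x).lt_of_ne hx0.symm) hlt.le hFj.1)
    · exact .inr (adj_of_lt_of_le hab' hmono.monotone hadj hgt hxi hFi.1)
  refine ⟨.of_adj_pair hFj.1 hi.le hji.le hdom, fun D' hD' => ?_⟩
  rw [Finset.card_pair hj.ne]
  exact hD'.two_le_card_s10 ⟨i, le_refl i⟩

/-- Let `G` be a connected interval graph with at least two vertices, with interval
model `I_i = [a i, b i]` having pairwise distinct endpoints, and vertices in left-end
ordering. Here `v0` is the first vertex (`v_1` in 1-indexed notation) and
`G_i = G[{x | x ≤ i}]`. For `i > 1`, if `F(v_i) = v_j` with `j > 1` and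
`F(v_j) = v_1` (`F` denotes the least-index neighbor), then `{v_1, v_j}` is a
semipaired dominating set of `G_i` of minimum cardinality. -/
theorem interval_minSemiPD_second {n : ℕ} (hn : 2 ≤ n) (a b : Fin n → ℝ)
    (G : SimpleGraph (Fin n))
    (hab : ∀ i, a i < b i)
    (hbinj : Function.Injective b)
    (habne : ∀ i j : Fin n, a i ≠ b j)
    (hmono : StrictMono a)
    (hadj : ∀ i j : Fin n, G.Adj i j ↔
      i ≠ j ∧ (Set.Icc (a i) (b i) ∩ Set.Icc (a j) (b j)).Nonempty)
    (hconn : G.Connected)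
    (v0 i j : Fin n) (hv0 : (v0 : ℕ) = 0) (hi : v0 < i) (hj : v0 < j)
    (hFi : G.Adj j i ∧ ∀ x : Fin n, G.Adj x i → j ≤ x)
    (hFj : G.Adj v0 j ∧ ∀ x : Fin n, G.Adj x j → v0 ≤ x) :
    IsMinSemiPDOn G {x : Fin n | x ≤ i} {v0, j} :=
  interval_minSemiPD_second_general a b G hab hmono hadj v0 i j hv0 hi hj hFi hFj
end
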